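/- Fix an integer c ≥ 3. Then the average effective resistance of the two-dimensional toroidal grid with sides M and M^{c−1} satisfies lim_{M→∞} R_ave(T_{M, M^{c−1}}) / M^{c−2} = 1/12; equivalently, with total size N = M^c, R_ave(T_{N^{1/c}, N^{(c−1)/c}}) ~ N^{(c−2)/c}/12. -/

import Mathlib

/-
Split the double sum according to whether the frequencies `i`, `j` vanish.  The row `i = 0` and the
column `j = 0` are sums over the nontrivial eigenvalues `2 - 2 cos (2πj/n)` of the cycle `C_n`, and
`∑_{j=1}^{n-1} 1 / (2 - 2 cos (2πj/n)) = (n² - 1)/12` exactly: on the nontrivial `n`-th roots of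
unity, `1 / (2 - z - z⁻¹)` is the discrete Fourier transform of `k (k - n) / (2n)`.  For the
off-axis frequencies, `2 - 2 cos (2πj/n) ≥ (4 min(j, n - j) / n)²` and AM-GM bound the sum by
`M₁ M₂ (1 + log M₁)(1 + log M₂) / 8`.  Hence `R_ave(T_{M₁,M₂}) · M₁ / M₂ → 1/12` as soon as
`M₁ log M₁ log M₂ = o(M₂)`, which holds for `M₂ = M₁^(c-1)` with `c ≥ 3`.
-/

open Real Finset

/-- Average effective resistance of the two-dimensional toroidal grid `T_{M1,M2}`. -/
noncomputable def Rave2 (M1 M2 : ℕ) : ℝ :=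
  (1 / ((M1 : ℝ) * M2)) * ∑ i ∈ Finset.range M1, ∑ j ∈ Finset.range M2,
    if i = 0 ∧ j = 0 then 0
    else 1 / (4 - 2 * Real.cos (2 * Real.pi * i / M1) - 2 * Real.cos (2 * Real.pi * j / M2))

open Filter Topology

section RootsOfUnity

variable {K : Type*} [Field K] [CharZero K]

theorem one_sub_pow_three_mul_sum_range (z : K) (n N : ℕ) :
    (1 - z) ^ 3 * ∑ k ∈ range N, (k : K) * (k - n) * z ^ k =
      z + z ^ 2 - N ^ 2 * z ^ N + (2 * N ^ 2 - 2 * N - 1) * z ^ (N + 1) - (N - 1) ^ 2 * z ^ (N + 2)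
        - n * (1 - z) * (z - N * z ^ N + (N - 1) * z ^ (N + 1)) := by
  induction N with
  | zero => simp
  | succ N ih =>
    rw [sum_range_succ, mul_add, ih]
    push_cast
    ring

theorem sum_range_mul_sub_mul (n N : ℕ) :
    ∑ k ∈ range N, (k : K) * (k - n) = N * (N - 1) * (2 * N - 1) / 6 - n * N * (N - 1) / 2 := by
  induction N with
  | zero => simp
  | succ N ih =>
    rw [sum_range_succ, ih]
    push_cast
    ring

theorem two_sub_sub_inv_mul_sum_range {z : K} {n : ℕ} (hzn : z ^ n = 1) (hz : z ≠ 1) :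
    (2 - z - z⁻¹) * ∑ k ∈ range n, (k : K) * (k - n) * z ^ k = 2 * n := by
  obtain rfl | hn := eq_or_ne n 0
  · simp
  have hz0 : z ≠ 0 := by rintro rfl; simp [hn] at hzn
  have h1z : 1 - z ≠ 0 := sub_ne_zero.mpr hz.symm
  set S := ∑ k ∈ range n, (k : K) * (k - n) * z ^ k
  have h3 : (1 - z) * ((1 - z) ^ 2 * S + 2 * n * z) = 0 := by
    -- the closed form at `N = n`; the second coefficient is that of `z ^ n` in it
    linear_combination one_sub_pow_three_mul_sum_range z n n + (-n ^ 2 + (2 * n ^ 2 - 2 * n - 1) * z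
      - (n - 1) ^ 2 * z ^ 2 - n * (1 - z) * (-n + (n - 1) * z) : K) * hzn
  have h2 := (mul_eq_zero.mp h3).resolve_left h1z
  field_simp
  linear_combination (-1 : K) * h2

theorem IsPrimitiveRoot.sum_Ico_one_div_two_sub_pow_sub_inv {ζ : K} {n : ℕ}
    (hζ : IsPrimitiveRoot ζ n) (hn : n ≠ 0) :
    ∑ j ∈ Ico 1 n, 1 / (2 - ζ ^ j - (ζ ^ j)⁻¹) = ((n : K) ^ 2 - 1) / 12 := by
  have hn' : (2 * n : K) ≠ 0 := by simpa using hn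
  have hpow : ∀ k, (ζ ^ k) ^ n = 1 := fun k => by
    rw [← pow_mul, mul_comm, pow_mul, hζ.pow_eq_one, one_pow]
  have hterm : ∀ j ∈ Ico 1 n, 1 / (2 - ζ ^ j - (ζ ^ j)⁻¹) =
      (2 * n : K)⁻¹ * ∑ k ∈ range n, (k : K) * (k - n) * (ζ ^ k) ^ j := by
    intro j hj
    have h := two_sub_sub_inv_mul_sum_range (hpow j)
      (hζ.pow_ne_one_of_pos_of_lt (Nat.one_le_iff_ne_zero.mp (mem_Ico.mp hj).1) (mem_Ico.mp hj).2)
    simp only [← pow_mul, mul_comm j] at h ⊢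
    rw [one_div]
    refine inv_eq_of_mul_eq_one_right ?_
    rw [mul_left_comm, h, inv_mul_cancel₀ hn']
  have hgeom : ∀ k ∈ range n, (k : K) * (k - n) * ∑ j ∈ range n, (ζ ^ k) ^ j = 0 := by
    intro k hk
    rcases Nat.eq_zero_or_pos k with rfl | hk0
    · simp
    · rw [geom_sum_eq (hζ.pow_ne_one_of_pos_of_lt hk0.ne' (mem_range.mp hk)), hpow, sub_self,
        zero_div, mul_zero]
  calc ∑ j ∈ Ico 1 n, 1 / (2 - ζ ^ j - (ζ ^ j)⁻¹)
      = (2 * n : K)⁻¹ * ∑ k ∈ range n, (k : K) * (k - n) * ∑ j ∈ Ico 1 n, (ζ ^ k) ^ j := by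
        rw [sum_congr rfl hterm, ← mul_sum, sum_comm]
        simp only [mul_sum]
    _ = (2 * n : K)⁻¹ * -∑ k ∈ range n, (k : K) * (k - n) := by
        rw [← sum_neg_distrib]
        congr 1
        refine sum_congr rfl fun k hk => ?_
        have hsplit := sum_range_eq_add_Ico (fun j => (ζ ^ k) ^ j) (Nat.pos_of_ne_zero hn)
        rw [pow_zero] at hsplit
        linear_combination hgeom k hk - (k : K) * (k - n) * hsplit
    _ = ((n : K) ^ 2 - 1) / 12 := by
        rw [sum_range_mul_sub_mul]
        field_simp
        ring

end RootsOfUnity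

noncomputable def cycleEigenvalue (n j : ℕ) : ℝ := 2 - 2 * cos (2 * π * j / n)

theorem cycleEigenvalue_zero (n : ℕ) : cycleEigenvalue n 0 = 0 := by
  simp [cycleEigenvalue]

theorem cycleEigenvalue_nonneg (n j : ℕ) : 0 ≤ cycleEigenvalue n j := by
  have := cos_le_one (2 * π * j / n)
  rw [cycleEigenvalue]
  linarith

theorem ofReal_cycleEigenvalue (n j : ℕ) :
    (cycleEigenvalue n j : ℂ) = 2 - Complex.exp (2 * π * Complex.I / n) ^ j
      - (Complex.exp (2 * π * Complex.I / n) ^ j)⁻¹ := by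
  rw [← Complex.exp_nat_mul, ← Complex.exp_neg, cycleEigenvalue]
  push_cast
  rw [mul_assoc, Complex.two_cos]
  ring_nf

theorem sum_one_div_cycleEigenvalue {n : ℕ} (hn : n ≠ 0) :
    ∑ j ∈ Ico 1 n, 1 / cycleEigenvalue n j = ((n : ℝ) ^ 2 - 1) / 12 := by
  apply Complex.ofReal_injective
  push_cast
  simp only [ofReal_cycleEigenvalue]
  exact (Complex.isPrimitiveRoot_exp n hn).sum_Ico_one_div_two_sub_pow_sub_inv hn

theorem sq_four_mul_min_div_le_cycleEigenvalue {n j : ℕ} (hj : j ≤ n) :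
    (4 * (min j (n - j) : ℕ) / n : ℝ) ^ 2 ≤ cycleEigenvalue n j := by
  rcases Nat.eq_zero_or_pos n with rfl | hn
  · simp [cycleEigenvalue_nonneg]
  have hn' : (0 : ℝ) < n := by exact_mod_cast hn
  set m := min j (n - j)
  have hsin : sin (π * j / n) = sin (π * m / n) := by
    rcases min_choice j (n - j) with h | h <;> simp only [m, h]
    rw [Nat.cast_sub hj, ← sin_pi_sub]
    congr 1
    field_simp
  have hm : (2 * m : ℝ) ≤ n := by exact_mod_cast (by omega : 2 * m ≤ n)
  have hjordan := mul_le_sin (x := π * m / n) (by positivity) (by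
    rw [div_le_div_iff₀ hn' two_pos]; nlinarith [pi_pos])
  have heig : cycleEigenvalue n j = 4 * sin (π * j / n) ^ 2 := by
    rw [cycleEigenvalue, show 2 * π * j / n = 2 * (π * j / n) by ring, cos_two_mul, cos_sq']
    ring
  rw [heig, hsin]
  calc (4 * m / n : ℝ) ^ 2 = 4 * (2 / π * (π * m / n)) ^ 2 := by field_simp; ring
    _ ≤ 4 * sin (π * m / n) ^ 2 := by gcongr

theorem one_le_one_add_log_natCast {n : ℕ} (hn : n ≠ 0) : 1 ≤ 1 + log n :=
  le_add_of_nonneg_right (log_nonneg (Nat.one_le_cast.mpr (Nat.one_le_iff_ne_zero.mpr hn)))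

theorem sum_Ico_inv_le_one_add_log (n : ℕ) : ∑ j ∈ Ico 1 n, (j : ℝ)⁻¹ ≤ 1 + log n := by
  calc ∑ j ∈ Ico 1 n, (j : ℝ)⁻¹ ≤ ∑ j ∈ Icc 1 n, (j : ℝ)⁻¹ :=
        sum_le_sum_of_subset_of_nonneg Ico_subset_Icc_self fun _ _ _ => by positivity
    _ = harmonic n := by rw [harmonic_eq_sum_Icc]; push_cast; rfl
    _ ≤ 1 + log n := harmonic_le_one_add_log n

theorem sum_Ico_inv_min_le (n : ℕ) :
    ∑ j ∈ Ico 1 n, ((min j (n - j) : ℕ) : ℝ)⁻¹ ≤ 2 * (1 + log n) := by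
  have hmin : ∀ j, ((min j (n - j) : ℕ) : ℝ)⁻¹ ≤ (j : ℝ)⁻¹ + ((n - j : ℕ) : ℝ)⁻¹ := by
    intro j
    rcases min_choice j (n - j) with h | h <;> rw [h]
    · exact le_add_of_nonneg_right (by positivity)
    · exact le_add_of_nonneg_left (by positivity)
  calc ∑ j ∈ Ico 1 n, ((min j (n - j) : ℕ) : ℝ)⁻¹
      ≤ ∑ j ∈ Ico 1 n, ((j : ℝ)⁻¹ + ((n - j : ℕ) : ℝ)⁻¹) := sum_le_sum fun j _ => hmin j
    _ = 2 * ∑ j ∈ Ico 1 n, (j : ℝ)⁻¹ := by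
        rw [sum_add_distrib, sum_Ico_reflect (fun j => (j : ℝ)⁻¹) 1 (Nat.le_succ n)]
        simp only [Nat.add_sub_cancel, Nat.add_sub_cancel_left]
        ring
    _ ≤ 2 * (1 + log n) := by gcongr; exact sum_Ico_inv_le_one_add_log n

noncomputable def torusOffAxisSum (M1 M2 : ℕ) : ℝ :=
  ∑ i ∈ Ico 1 M1, ∑ j ∈ Ico 1 M2, 1 / (cycleEigenvalue M1 i + cycleEigenvalue M2 j)

theorem torusOffAxisSum_nonneg (M1 M2 : ℕ) : 0 ≤ torusOffAxisSum M1 M2 :=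
  sum_nonneg fun _ _ => sum_nonneg fun _ _ =>
    one_div_nonneg.mpr (add_nonneg (cycleEigenvalue_nonneg _ _) (cycleEigenvalue_nonneg _ _))

theorem one_div_add_le_of_sq_le {a b A B : ℝ} (ha : 0 < a) (hb : 0 < b) (hA : a ^ 2 ≤ A)
    (hB : b ^ 2 ≤ B) : 1 / (A + B) ≤ 1 / (2 * a * b) :=
  one_div_le_one_div_of_le (by positivity) ((two_mul_le_add_sq a b).trans (add_le_add hA hB))

theorem torusOffAxisSum_le (M1 M2 : ℕ) :
    torusOffAxisSum M1 M2 ≤ M1 * M2 * (1 + log M1) * (1 + log M2) / 8 := by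
  have hterm : ∀ i ∈ Ico 1 M1, ∀ j ∈ Ico 1 M2, 1 / (cycleEigenvalue M1 i + cycleEigenvalue M2 j)
      ≤ M1 * M2 / 32 * ((min i (M1 - i) : ℕ) : ℝ)⁻¹ * ((min j (M2 - j) : ℕ) : ℝ)⁻¹ := by
    intro i hi j hj
    obtain ⟨hi1, hi2⟩ := mem_Ico.mp hi
    obtain ⟨hj1, hj2⟩ := mem_Ico.mp hj
    have hm : (0 : ℝ) < (min i (M1 - i) : ℕ) := by norm_cast; omega
    have hk : (0 : ℝ) < (min j (M2 - j) : ℕ) := by norm_cast; omega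
    have hM1 : (0 : ℝ) < M1 := by norm_cast; omega
    have hM2 : (0 : ℝ) < M2 := by norm_cast; omega
    calc 1 / (cycleEigenvalue M1 i + cycleEigenvalue M2 j)
        ≤ 1 / (2 * (4 * (min i (M1 - i) : ℕ) / M1) * (4 * (min j (M2 - j) : ℕ) / M2)) :=
          one_div_add_le_of_sq_le (by positivity) (by positivity)
            (sq_four_mul_min_div_le_cycleEigenvalue hi2.le)
            (sq_four_mul_min_div_le_cycleEigenvalue hj2.le)
      _ = _ := by field_simp; norm_num
  calc torusOffAxisSum M1 M2
      ≤ ∑ i ∈ Ico 1 M1, ∑ j ∈ Ico 1 M2,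
          M1 * M2 / 32 * ((min i (M1 - i) : ℕ) : ℝ)⁻¹ * ((min j (M2 - j) : ℕ) : ℝ)⁻¹ :=
        sum_le_sum fun i hi => sum_le_sum fun j hj => hterm i hi j hj
    _ = (∑ i ∈ Ico 1 M1, M1 * M2 / 32 * ((min i (M1 - i) : ℕ) : ℝ)⁻¹)
          * ∑ j ∈ Ico 1 M2, ((min j (M2 - j) : ℕ) : ℝ)⁻¹ := (sum_mul_sum ..).symm
    _ ≤ M1 * M2 / 32 * (2 * (1 + log M1)) * (2 * (1 + log M2)) := by
        rw [← mul_sum]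
        gcongr
        · exact sum_Ico_inv_min_le M1
        · exact sum_Ico_inv_min_le M2
    _ = M1 * M2 * (1 + log M1) * (1 + log M2) / 8 := by ring

theorem mul_mul_Rave2 {M1 M2 : ℕ} (h1 : M1 ≠ 0) (h2 : M2 ≠ 0) :
    M1 * M2 * Rave2 M1 M2 =
      ((M1 : ℝ) ^ 2 - 1) / 12 + ((M2 : ℝ) ^ 2 - 1) / 12 + torusOffAxisSum M1 M2 := by
  have hsum : ∀ i j : ℕ, (4 - 2 * cos (2 * π * i / M1) - 2 * cos (2 * π * j / M2))
      = cycleEigenvalue M1 i + cycleEigenvalue M2 j := fun i j => by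
    simp only [cycleEigenvalue]; ring
  rw [Rave2, ← mul_assoc, mul_one_div_cancel (by positivity), one_mul]
  simp only [hsum]
  have hrow : ∀ i ∈ Ico 1 M1, (∑ j ∈ range M2, if i = 0 ∧ j = 0 then 0
      else 1 / (cycleEigenvalue M1 i + cycleEigenvalue M2 j))
      = 1 / cycleEigenvalue M1 i
        + ∑ j ∈ Ico 1 M2, 1 / (cycleEigenvalue M1 i + cycleEigenvalue M2 j) := by
    intro i hi
    simp only [Nat.one_le_iff_ne_zero.mp (mem_Ico.mp hi).1, false_and, if_false]
    rw [sum_range_eq_add_Ico _ (Nat.pos_of_ne_zero h2), cycleEigenvalue_zero, add_zero]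
  rw [sum_range_eq_add_Ico _ (Nat.pos_of_ne_zero h1), sum_congr rfl hrow, sum_add_distrib,
    sum_one_div_cycleEigenvalue h1, sum_range_eq_add_Ico _ (Nat.pos_of_ne_zero h2)]
  simp only [true_and, if_pos, cycleEigenvalue_zero, zero_add]
  rw [sum_congr rfl fun j hj => if_neg (Nat.one_le_iff_ne_zero.mp (mem_Ico.mp hj).1),
    sum_one_div_cycleEigenvalue h2, torusOffAxisSum]
  ring

theorem Rave2_mul_div_bounds {M1 M2 : ℕ} (h1 : M1 ≠ 0) (h2 : M2 ≠ 0) :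
    1 / 12 - ((M2 : ℝ)⁻¹) ^ 2 / 12 ≤ Rave2 M1 M2 * M1 / M2 ∧
      Rave2 M1 M2 * M1 / M2 ≤ 1 / 12 + (M1 * (1 + log M1) * (1 + log M2) / M2) ^ 2 / 12
        + M1 * (1 + log M1) * (1 + log M2) / M2 / 8 := by
  have hx : (1 : ℝ) ≤ M1 := Nat.one_le_cast.mpr (Nat.one_le_iff_ne_zero.mpr h1)
  have hV : Rave2 M1 M2 * M1 / M2 = (((M1 : ℝ) ^ 2 - 1) / 12 + ((M2 : ℝ) ^ 2 - 1) / 12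
      + torusOffAxisSum M1 M2) / (M2 : ℝ) ^ 2 := by
    rw [← mul_mul_Rave2 h1 h2]
    field_simp
  have hD := torusOffAxisSum_nonneg M1 M2
  rw [hV]
  constructor
  · calc 1 / 12 - ((M2 : ℝ)⁻¹) ^ 2 / 12 = (((M2 : ℝ) ^ 2 - 1) / 12) / (M2 : ℝ) ^ 2 := by
          field_simp
      _ ≤ _ := by gcongr; nlinarith
  · calc _ ≤ ((M1 : ℝ) ^ 2 / 12 + (M2 : ℝ) ^ 2 / 12
            + M1 * M2 * (1 + log M1) * (1 + log M2) / 8) / (M2 : ℝ) ^ 2 := by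
          gcongr ?_ / _
          linarith [torusOffAxisSum_le M1 M2]
      _ = 1 / 12 + (M1 / M2 : ℝ) ^ 2 / 12 + M1 * (1 + log M1) * (1 + log M2) / M2 / 8 := by
          field_simp
          ring
      _ ≤ _ := by
          gcongr
          calc (M1 : ℝ) = M1 * 1 * 1 := by ring
            _ ≤ _ := by gcongr <;> exact one_le_one_add_log_natCast ‹_›

theorem tendsto_Rave2_mul_div {ι : Type*} {l : Filter ι} {M1 M2 : ι → ℕ}
    (h1 : ∀ᶠ a in l, M1 a ≠ 0) (h2 : Tendsto M2 l atTop)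
    (hr : Tendsto (fun a => (M1 a : ℝ) * (1 + log (M1 a)) * (1 + log (M2 a)) / M2 a) l (𝓝 0)) :
    Tendsto (fun a => Rave2 (M1 a) (M2 a) * M1 a / M2 a) l (𝓝 (1 / 12)) := by
  have hinv : Tendsto (fun a => ((M2 a : ℝ))⁻¹) l (𝓝 0) :=
    tendsto_inv_atTop_zero.comp (tendsto_natCast_atTop_atTop.comp h2)
  have hlower := (hinv.pow 2).div_const 12 |>.const_sub (1 / 12 : ℝ)
  have hupper := (tendsto_const_nhds (x := (1 / 12 : ℝ))).add ((hr.pow 2).div_const 12)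
    |>.add (hr.div_const 8)
  simp only [ne_eq, OfNat.ofNat_ne_zero, not_false_eq_true, zero_pow, zero_div, sub_zero,
    add_zero] at hlower hupper
  refine tendsto_of_tendsto_of_tendsto_of_le_of_le' hlower hupper ?_ ?_ <;>
    filter_upwards [h1, h2.eventually_ne_atTop 0] with a ha1 ha2
  exacts [(Rave2_mul_div_bounds ha1 ha2).1, (Rave2_mul_div_bounds ha1 ha2).2]

theorem tendsto_one_add_mul_log_mul_one_add_mul_log_div (a b : ℝ) :
    Tendsto (fun x => (1 + a * log x) * (1 + b * log x) / x) atTop (𝓝 0) := by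
  have h : ∀ n : ℕ, Tendsto (fun x => log x ^ n / x) atTop (𝓝 0) := fun n => by
    simpa using tendsto_pow_log_div_mul_add_atTop 1 0 n one_ne_zero
  have := ((h 0).add ((h 1).const_mul (a + b))).add ((h 2).const_mul (a * b))
  simp only [mul_zero, add_zero] at this
  refine this.congr fun x => ?_
  ring

theorem tendsto_natCast_mul_one_add_log_mul_one_add_log_pow_div_pow {d : ℕ} (hd : 2 ≤ d) :
    Tendsto (fun M : ℕ =>
      (M : ℝ) * (1 + log M) * (1 + log ((M ^ d : ℕ) : ℝ)) / ((M ^ d : ℕ) : ℝ)) atTop (𝓝 0) := by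
  refine squeeze_zero' ?_ ?_
    ((tendsto_one_add_mul_log_mul_one_add_mul_log_div 1 d).comp tendsto_natCast_atTop_atTop)
  all_goals filter_upwards [eventually_ne_atTop 0] with M hM
  · positivity
  · have hM1 : (1 : ℝ) ≤ M := Nat.one_le_cast.mpr (Nat.one_le_iff_ne_zero.mpr hM)
    simp only [Function.comp_apply, one_mul]
    push_cast
    rw [log_pow, div_le_div_iff₀ (by positivity) (by positivity)]
    calc (M : ℝ) * (1 + log M) * (1 + d * log M) * M
        = (1 + log M) * (1 + d * log M) * (M : ℝ) ^ 2 := by ring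
      _ ≤ (1 + log M) * (1 + d * log M) * (M : ℝ) ^ d := by
          gcongr

theorem torus2_power_asymptotic (c : ℕ) (hc : 3 ≤ c) :
    Filter.Tendsto (fun M : ℕ => Rave2 M (M ^ (c - 1)) / (M : ℝ) ^ (c - 2)) Filter.atTop
      (nhds (1 / 12)) := by
  have hr := tendsto_natCast_mul_one_add_log_mul_one_add_log_pow_div_pow (d := c - 1) (by omega)
  refine (tendsto_Rave2_mul_div (eventually_ne_atTop 0) (tendsto_pow_atTop (by omega)) hr).congr' ?_
  filter_upwards [eventually_ne_atTop 0] with M hM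
  have hpow : (M : ℝ) ^ (c - 1) = M ^ (c - 2) * M := by rw [← pow_succ]; congr 1; omega
  push_cast
  rw [hpow]
  field_simp
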